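/- arXiv:1206.1488 — 2 statements merged into one kernel-verified Lean document; each statement's English description precedes it below -/
import Mathlib

section
/- Let 𝒯 be a set of bounded operators on a complex separable Hilbert space H and let {P_n}_{n∈ℕ} be an increasing sequence of non-zero finite-rank orthogonal projections converging strongly to the identity such that ‖T P_n − P_n T‖ → 0 (operator norm) for every T ∈ 𝒯 (i.e. {P_n} quasidiagonalizes 𝒯). Then {P_n} is a Følner sequence for 𝒯, i.e. ‖T P_n − P_n T‖₂ / ‖P_n‖₂ → 0 for every T ∈ 𝒯. -/
/-! For a projection `Q` and `C = T Q - Q T` one has `C = C Q + Q C` and `Q C Q = 0`, so the two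
summands map every vector to orthogonal vectors. Pythagoras, `‖Q C‖₂ = ‖C* Q‖₂` and
`‖A Q‖₂ ≤ ‖A‖ ‖Q‖₂` give `‖C‖₂² ≤ 2 ‖C‖² ‖Q‖₂²`, which is finite for finite-rank `Q`. Hence
`‖[T, P n]‖₂ / ‖P n‖₂ ≤ √2 ‖[T, P n]‖ → 0`. -/

open Filter Topology
open scoped ComplexOrder

noncomputable section

variable {H : Type*} [NormedAddCommGroup H] [InnerProductSpace ℂ H] [CompleteSpace H]

/-- `P` is a finite-rank orthogonal projection on the Hilbert space `H`. -/
def IsFinRankProj (P : H →L[ℂ] H) : Prop :=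
  IsIdempotentElem P ∧ IsSelfAdjoint P ∧ FiniteDimensional ℂ (LinearMap.range (P : H →ₗ[ℂ] H))

/-- The Hilbert–Schmidt norm of an operator, computed with respect to the Hilbert basis `b`
(for Hilbert–Schmidt operators it is independent of the choice of `b`). -/
def hsNorm {ι : Type*} (b : HilbertBasis ι ℂ H) (T : H →L[ℂ] H) : ℝ :=
  Real.sqrt (∑' i, ‖T (b i)‖ ^ 2)

/-- The canonical trace of an operator, computed with respect to the Hilbert basis `b`
(for trace-class operators it is independent of the choice of `b`). -/
def trOp {ι : Type*} (b : HilbertBasis ι ℂ H) (T : H →L[ℂ] H) : ℂ :=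
  ∑' i, (inner ℂ (b i) (T (b i)) : ℂ)

/-- `{P n}` is a Følner sequence (of non-zero finite-rank orthogonal projections)
for the set of operators `S ⊆ L(H)`. -/
def IsFolnerSeq {ι : Type*} (b : HilbertBasis ι ℂ H) (S : Set (H →L[ℂ] H))
    (P : ℕ → H →L[ℂ] H) : Prop :=
  (∀ n, IsFinRankProj (P n) ∧ P n ≠ 0) ∧
  ∀ A ∈ S, Tendsto (fun n => hsNorm b (A * P n - P n * A) / hsNorm b (P n)) atTop (𝓝 0)

/-- A proper Følner sequence: an increasing Følner sequence converging strongly to `1`. -/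
def IsProperFolnerSeq {ι : Type*} (b : HilbertBasis ι ℂ H) (S : Set (H →L[ℂ] H))
    (P : ℕ → H →L[ℂ] H) : Prop :=
  IsFolnerSeq b S P ∧ Monotone (fun n => LinearMap.range (P n : H →ₗ[ℂ] H)) ∧
    ∀ x : H, Tendsto (fun n => P n x) atTop (𝓝 x)

open scoped ENNReal InnerProductSpace

section HilbertSchmidt

variable {𝕜 E ι : Type*} [RCLike 𝕜] [NormedAddCommGroup E] [InnerProductSpace 𝕜 E]

/-- The square of `hsNorm`, valued in `ℝ≥0∞` so that it is `⊤` rather than a junk `0` when the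
series diverges. -/
def hsENormSq (b : HilbertBasis ι 𝕜 E) (A : E →L[𝕜] E) : ℝ≥0∞ :=
  ∑' i, ‖A (b i)‖ₑ ^ 2

theorem enorm_sq_eq_ofReal {F : Type*} [SeminormedAddCommGroup F] (x : F) :
    ‖x‖ₑ ^ 2 = ENNReal.ofReal (‖x‖ ^ 2) := by
  rw [ENNReal.ofReal_pow (norm_nonneg x), ofReal_norm]

theorem enorm_inner_symm (x y : E) : ‖⟪x, y⟫_𝕜‖ₑ = ‖⟪y, x⟫_𝕜‖ₑ := by
  rw [← ofReal_norm, norm_inner_symm, ofReal_norm]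

theorem enorm_add_sq_of_inner_eq_zero {x y : E} (h : ⟪x, y⟫_𝕜 = 0) :
    ‖x + y‖ₑ ^ 2 = ‖x‖ₑ ^ 2 + ‖y‖ₑ ^ 2 := by
  rw [enorm_sq_eq_ofReal, enorm_sq_eq_ofReal, enorm_sq_eq_ofReal,
    ← ENNReal.ofReal_add (by positivity) (by positivity), sq, sq, sq,
    norm_add_sq_eq_norm_sq_add_norm_sq_of_inner_eq_zero x y h]

theorem HilbertBasis.tsum_enorm_inner_sq (b : HilbertBasis ι 𝕜 E) (x : E) :
    ∑' i, ‖⟪b i, x⟫_𝕜‖ₑ ^ 2 = ‖x‖ₑ ^ 2 := by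
  have h : HasSum (fun i => ‖⟪b i, x⟫_𝕜‖ ^ 2) (‖x‖ ^ 2) := by
    simpa [b.repr_apply_apply] using lp.hasSum_norm (p := 2) (by norm_num) (b.repr x)
  simp_rw [enorm_sq_eq_ofReal]
  rw [← ENNReal.ofReal_tsum_of_nonneg (fun i => by positivity) h.summable, h.tsum_eq]

theorem hsENormSq_mul_le (b : HilbertBasis ι 𝕜 E) (A B : E →L[𝕜] E) :
    hsENormSq b (A * B) ≤ ‖A‖ₑ ^ 2 * hsENormSq b B := by
  simp_rw [hsENormSq, ← ENNReal.tsum_mul_left, ← mul_pow]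
  gcongr with i
  exact A.le_opENorm _

variable [CompleteSpace E]

theorem hsENormSq_star (b : HilbertBasis ι 𝕜 E) (A : E →L[𝕜] E) :
    hsENormSq b (star A) = hsENormSq b A := calc
  hsENormSq b (star A) = ∑' i, ∑' j, ‖⟪b j, star A (b i)⟫_𝕜‖ₑ ^ 2 :=
    tsum_congr fun i => (b.tsum_enorm_inner_sq _).symm
  _ = ∑' i, ∑' j, ‖⟪b i, A (b j)⟫_𝕜‖ₑ ^ 2 := by
    simp_rw [ContinuousLinearMap.star_eq_adjoint, ContinuousLinearMap.adjoint_inner_right,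
      enorm_inner_symm (b _)]
  _ = ∑' j, ∑' i, ‖⟪b i, A (b j)⟫_𝕜‖ₑ ^ 2 := ENNReal.tsum_comm
  _ = hsENormSq b A := tsum_congr fun j => b.tsum_enorm_inner_sq _

theorem hsENormSq_lt_top_of_finiteDimensional_range (b : HilbertBasis ι 𝕜 E) (A : E →L[𝕜] E)
    [FiniteDimensional 𝕜 (LinearMap.range (A : E →ₗ[𝕜] E))] : hsENormSq b A < ⊤ := by
  let e := stdOrthonormalBasis 𝕜 (LinearMap.range (A : E →ₗ[𝕜] E))
  have hA : ∀ x, ‖A x‖ₑ ^ 2 = ∑ j, ‖⟪star A (e j : E), x⟫_𝕜‖ₑ ^ 2 := by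
    intro x
    have h : ‖A x‖ ^ 2 = ∑ j, ‖⟪(e j : E), A x⟫_𝕜‖ ^ 2 :=
      (e.sum_sq_norm_inner_right ⟨A x, LinearMap.mem_range_self _ x⟩).symm
    rw [enorm_sq_eq_ofReal, h, ENNReal.ofReal_sum_of_nonneg (fun j _ => by positivity)]
    refine Finset.sum_congr rfl fun j _ => ?_
    rw [← enorm_sq_eq_ofReal, ContinuousLinearMap.star_eq_adjoint,
      ContinuousLinearMap.adjoint_inner_left]
  calc hsENormSq b A = ∑' i, ∑ j, ‖⟪star A (e j : E), b i⟫_𝕜‖ₑ ^ 2 :=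
        tsum_congr fun i => hA (b i)
    _ = ∑ j, ‖star A (e j : E)‖ₑ ^ 2 := by
      rw [Summable.tsum_finsetSum (fun j _ => ENNReal.summable)]
      simp_rw [enorm_inner_symm _ (b _), b.tsum_enorm_inner_sq]
    _ < ⊤ := ENNReal.sum_lt_top.2 fun j _ => by finiteness

theorem hsENormSq_commutator_le (b : HilbertBasis ι 𝕜 E) (T : E →L[𝕜] E) {Q : E →L[𝕜] E}
    (hQ : IsStarProjection Q) :
    hsENormSq b (T * Q - Q * T) ≤ 2 * ‖T * Q - Q * T‖ₑ ^ 2 * hsENormSq b Q := by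
  set C := T * Q - Q * T
  have hQQ : Q * Q = Q := hQ.isIdempotentElem.eq
  have hsplit : C = C * Q + Q * C := by
    simp only [C, mul_sub, sub_mul, mul_assoc, hQQ]
    rw [← mul_assoc Q Q, hQQ]; abel
  have hQCQ : Q * C * Q = 0 := by
    simp only [C, mul_sub, sub_mul, mul_assoc, hQQ]
    rw [← mul_assoc Q Q, hQQ, sub_self]
  have horth : ∀ x, ⟪(C * Q) x, (Q * C) x⟫_𝕜 = 0 := fun x => calc
    ⟪(C * Q) x, (Q * C) x⟫_𝕜 = ⟪(Q * C * Q) x, C x⟫_𝕜 :=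
      (hQ.isSelfAdjoint.isSymmetric _ _).symm
    _ = 0 := by rw [hQCQ, zero_apply, inner_zero_left]
  have hpyth : ∀ x, ‖C x‖ₑ ^ 2 = ‖(C * Q) x‖ₑ ^ 2 + ‖(Q * C) x‖ₑ ^ 2 := fun x => by
    rw [← enorm_add_sq_of_inner_eq_zero (horth x), ← add_apply, ← hsplit]
  calc hsENormSq b C = hsENormSq b (C * Q) + hsENormSq b (star C * Q) := by
        rw [← hsENormSq_star b (star C * Q), star_mul, star_star, hQ.isSelfAdjoint.star_eq,
          hsENormSq, hsENormSq, hsENormSq, ← ENNReal.tsum_add]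
        exact tsum_congr fun i => hpyth (b i)
    _ ≤ ‖C‖ₑ ^ 2 * hsENormSq b Q + ‖star C‖ₑ ^ 2 * hsENormSq b Q :=
        add_le_add (hsENormSq_mul_le b C Q) (hsENormSq_mul_le b (star C) Q)
    _ = 2 * ‖C‖ₑ ^ 2 * hsENormSq b Q := by
        rw [show ‖star C‖ₑ = ‖C‖ₑ from congrArg ENNReal.ofNNReal (nnnorm_star C)]
        ring

end HilbertSchmidt

section ComplexHilbertSchmidt

variable {E ι : Type*} [NormedAddCommGroup E] [InnerProductSpace ℂ E]

-- A divergent series makes both sides `0`.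
theorem hsNorm_eq_sqrt_toReal (b : HilbertBasis ι ℂ E) (A : E →L[ℂ] E) :
    hsNorm b A = √(hsENormSq b A).toReal := by
  rw [hsNorm, hsENormSq, ENNReal.tsum_toReal_eq (fun i => by finiteness)]
  simp [ENNReal.toReal_pow]

theorem hsNorm_commutator_le [CompleteSpace E] (b : HilbertBasis ι ℂ E) (T : E →L[ℂ] E)
    {Q : E →L[ℂ] E} (hQ : IsStarProjection Q)
    [FiniteDimensional ℂ (LinearMap.range (Q : E →ₗ[ℂ] E))] :
    hsNorm b (T * Q - Q * T) ≤ √2 * ‖T * Q - Q * T‖ * hsNorm b Q := by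
  have hQ_ne_top := (hsENormSq_lt_top_of_finiteDimensional_range b Q).ne
  rw [hsNorm_eq_sqrt_toReal, hsNorm_eq_sqrt_toReal]
  calc √(hsENormSq b (T * Q - Q * T)).toReal
      ≤ √(2 * ‖T * Q - Q * T‖ₑ ^ 2 * hsENormSq b Q).toReal :=
        Real.sqrt_le_sqrt (ENNReal.toReal_mono (by finiteness) (hsENormSq_commutator_le b T hQ))
    _ = √2 * ‖T * Q - Q * T‖ * √(hsENormSq b Q).toReal := by
        simp [ENNReal.toReal_mul, ENNReal.toReal_pow, Real.sqrt_mul, Real.sqrt_sq]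

end ComplexHilbertSchmidt

theorem isFolnerSeq_of_quasidiagonalizing_general
    {H : Type*} [NormedAddCommGroup H] [InnerProductSpace ℂ H] [CompleteSpace H]
    {ι : Type*} (b : HilbertBasis ι ℂ H)
    (𝒯 : Set (H →L[ℂ] H)) (P : ℕ → H →L[ℂ] H)
    (hP : ∀ n, IsFinRankProj (P n) ∧ P n ≠ 0)
    (hqd : ∀ T ∈ 𝒯, Tendsto (fun n => ‖T * P n - P n * T‖) atTop (𝓝 0)) :
    IsFolnerSeq b 𝒯 P := by
  refine ⟨hP, fun T hT => ?_⟩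
  have hbound : ∀ n, hsNorm b (T * P n - P n * T) / hsNorm b (P n)
      ≤ √2 * ‖T * P n - P n * T‖ := by
    intro n
    obtain ⟨⟨hidem, hsa, hfin⟩, -⟩ := hP n
    exact div_le_of_le_mul₀ (Real.sqrt_nonneg _) (by positivity)
      (hsNorm_commutator_le b T ⟨hidem, hsa⟩)
  refine squeeze_zero (fun n => div_nonneg (Real.sqrt_nonneg _) (Real.sqrt_nonneg _)) hbound ?_
  simpa using (hqd T hT).const_mul √2

/-- a quasidiagonalizing sequence of projections (increasing, strongly
convergent to `1`, asymptotically commuting in operator norm with every `T ∈ 𝒯`) is a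
Følner sequence for `𝒯`. -/
theorem isFolnerSeq_of_quasidiagonalizing
    {H : Type*} [NormedAddCommGroup H] [InnerProductSpace ℂ H] [CompleteSpace H]
    {ι : Type*} [Countable ι] (b : HilbertBasis ι ℂ H)
    (𝒯 : Set (H →L[ℂ] H)) (P : ℕ → H →L[ℂ] H)
    (hP : ∀ n, IsFinRankProj (P n) ∧ P n ≠ 0)
    (hmono : Monotone fun n => LinearMap.range (P n : H →ₗ[ℂ] H))
    (hstrong : ∀ x : H, Tendsto (fun n => P n x) atTop (𝓝 x))
    (hqd : ∀ T ∈ 𝒯, Tendsto (fun n => ‖T * P n - P n * T‖) atTop (𝓝 0)) :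
    IsFolnerSeq b 𝒯 P :=
  isFolnerSeq_of_quasidiagonalizing_general b 𝒯 P hP hqd
end
end

section
/- Let 𝒜 ⊂ L(H) be a unital separable C*-algebra of bounded operators on a complex separable Hilbert space H. If 𝒜 has a Følner sequence {P_n}_{n∈ℕ}, then 𝒜 has an amenable trace. Moreover, any weak-* cluster point of the sequence of states ψ_n(X) := Tr(X P_n)/Tr(P_n) on L(H) is a hypertrace for 𝒜, and its restriction to 𝒜 is an amenable trace. -/
open Filter Topology
open scoped ComplexOrder

noncomputable section

variable {H : Type*} [NormedAddCommGroup H] [InnerProductSpace ℂ H] [CompleteSpace H]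

/-- A state on a unital complex `*`-algebra: a unital positive linear functional. -/
def IsStateOn {A : Type*} [Ring A] [Algebra ℂ A] [StarRing A] (φ : A →ₗ[ℂ] ℂ) : Prop :=
  φ 1 = 1 ∧ ∀ a, 0 ≤ φ (star a * a)

/-- `ψ` is a hypertrace on `L(H)` for the set `S`: a state on `L(H)` centralized by `S`. -/
def IsHypertrace (ψ : (H →L[ℂ] H) →ₗ[ℂ] ℂ) (S : Set (H →L[ℂ] H)) : Prop :=
  IsStateOn ψ ∧ ∀ X : H →L[ℂ] H, ∀ A ∈ S, ψ (X * A) = ψ (A * X)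

/-- The inclusion of a star subalgebra as a linear map. -/
def valLM (𝒜 : StarSubalgebra ℂ (H →L[ℂ] H)) : ↥𝒜 →ₗ[ℂ] (H →L[ℂ] H) :=
  { toFun := Subtype.val, map_add' := fun _ _ => rfl, map_smul' := fun _ _ => rfl }

/-- `τ` is an amenable trace on the concrete C*-algebra `𝒜 ⊆ L(H)`: a state on `𝒜` which
extends to a state `ψ` on `L(H)` satisfying `ψ(XA) = ψ(AX)` for `X ∈ L(H)`, `A ∈ 𝒜`. -/
def IsAmenableTrace (𝒜 : StarSubalgebra ℂ (H →L[ℂ] H)) (τ : ↥𝒜 →ₗ[ℂ] ℂ) : Prop :=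
  IsStateOn τ ∧ ∃ ψ : (H →L[ℂ] H) →ₗ[ℂ] ℂ,
    IsHypertrace ψ ↑𝒜 ∧ ∀ a : ↥𝒜, ψ (valLM 𝒜 a) = τ a

/-!
The normalized traces `ψₙ(X) = Tr(X Pₙ) / Tr(Pₙ)` are states of norm one, so by Banach–Alaoglu
they have weak-* cluster points, and every cluster point is again a state. Since `Pₙ` has finite
rank the trace is cyclic, and `Pₙ² = Pₙ` gives
`Tr(X A Pₙ) - Tr(A X Pₙ) = Tr(Pₙ X [A, Pₙ]) + Tr([A, Pₙ] X Pₙ)`; Cauchy–Schwarz for the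
Hilbert–Schmidt inner product bounds this by `‖X‖ (‖[A, Pₙ]‖₂ + ‖[A*, Pₙ]‖₂) ‖Pₙ‖₂`. As
`Tr(Pₙ) = ‖Pₙ‖₂²`, the Følner condition (applied to `A` and `A*`) makes `ψₙ(XA) - ψₙ(AX) → 0`,
so every cluster point is a hypertrace.
-/

open ContinuousLinearMap

local notation "⟪" x ", " y "⟫" => @inner ℂ _ _ x y

section HilbertSchmidt

variable {E : Type*} [NormedAddCommGroup E] [InnerProductSpace ℂ E] {ι : Type*}
  (b : HilbertBasis ι ℂ E)

lemma trOp_add {S T : E →L[ℂ] E} (hS : Summable fun i => ⟪b i, S (b i)⟫)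
    (hT : Summable fun i => ⟪b i, T (b i)⟫) : trOp b (S + T) = trOp b S + trOp b T := by
  simp only [trOp, add_apply, inner_add_right]
  exact hS.tsum_add hT

lemma trOp_sub {S T : E →L[ℂ] E} (hS : Summable fun i => ⟪b i, S (b i)⟫)
    (hT : Summable fun i => ⟪b i, T (b i)⟫) : trOp b (S - T) = trOp b S - trOp b T := by
  simp only [trOp, sub_apply, inner_sub_right]
  exact hS.tsum_sub hT

lemma trOp_smul (c : ℂ) (T : E →L[ℂ] E) : trOp b (c • T) = c * trOp b T := by
  simp only [trOp, smul_apply, inner_smul_right]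
  exact tsum_mul_left

lemma trOp_star_mul [CompleteSpace E] (S R : E →L[ℂ] E) :
    trOp b (star S * R) = ∑' i, ⟪S (b i), R (b i)⟫ := by
  simp only [trOp, star_eq_adjoint, mul_apply_eq_comp, adjoint_inner_right]

lemma hsNorm_nonneg (T : E →L[ℂ] E) : 0 ≤ hsNorm b T :=
  Real.sqrt_nonneg _

lemma sq_hsNorm (T : E →L[ℂ] E) : hsNorm b T ^ 2 = ∑' i, ‖T (b i)‖ ^ 2 :=
  Real.sq_sqrt (tsum_nonneg fun _ => sq_nonneg _)

lemma hsNorm_neg (T : E →L[ℂ] E) : hsNorm b (-T) = hsNorm b T := by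
  simp only [hsNorm, neg_apply, norm_neg]

lemma hsNorm_pos {T : E →L[ℂ] E} (hT : Summable fun i => ‖T (b i)‖ ^ 2) (hT₀ : T ≠ 0) :
    0 < hsNorm b T := by
  obtain ⟨i, hi⟩ : ∃ i, T (b i) ≠ 0 := by
    by_contra! h
    refine hT₀ (ext fun x => ?_)
    exact ((b.hasSum_repr x).mapL T).unique (by simp [h])
  exact Real.sqrt_pos.mpr (hT.tsum_pos (fun _ => sq_nonneg _) i (by positivity))

/-- Cauchy–Schwarz for the Hilbert–Schmidt inner product. -/
lemma norm_trOp_star_mul_le [CompleteSpace E] {S R : E →L[ℂ] E}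
    (hS : Summable fun i => ‖S (b i)‖ ^ 2) (hR : Summable fun i => ‖R (b i)‖ ^ 2) :
    ‖trOp b (star S * R)‖ ≤ hsNorm b S * hsNorm b R := by
  obtain ⟨hsum, hle⟩ := Real.summable_and_inner_le_Lp_mul_Lq_tsum_of_nonneg .two_two
    (f := fun i => ‖S (b i)‖) (g := fun i => ‖R (b i)‖) (fun _ => norm_nonneg _)
    (fun _ => norm_nonneg _) (by simpa using hS) (by simpa using hR)
  rw [trOp_star_mul]
  calc ‖∑' i, ⟪S (b i), R (b i)⟫‖ ≤ ∑' i, ‖S (b i)‖ * ‖R (b i)‖ :=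
        tsum_of_norm_bounded hsum.hasSum fun i => norm_inner_le_norm _ _
    _ ≤ hsNorm b S * hsNorm b R := by
        simpa [hsNorm, Real.sqrt_eq_rpow] using hle

lemma norm_mul_apply_sq_le (X T : E →L[ℂ] E) (i : ι) :
    ‖(X * T) (b i)‖ ^ 2 ≤ ‖X‖ ^ 2 * ‖T (b i)‖ ^ 2 := by
  rw [← mul_pow]
  exact pow_le_pow_left₀ (norm_nonneg _) (X.le_opNorm _) 2

lemma summable_norm_mul_apply_sq (X : E →L[ℂ] E) {T : E →L[ℂ] E}
    (hT : Summable fun i => ‖T (b i)‖ ^ 2) : Summable fun i => ‖(X * T) (b i)‖ ^ 2 :=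
  (hT.mul_left _).of_nonneg_of_le (fun _ => sq_nonneg _) (norm_mul_apply_sq_le b X T)

lemma hsNorm_mul_le (X : E →L[ℂ] E) {T : E →L[ℂ] E}
    (hT : Summable fun i => ‖T (b i)‖ ^ 2) : hsNorm b (X * T) ≤ ‖X‖ * hsNorm b T := by
  refine le_of_sq_le_sq ?_ (mul_nonneg (norm_nonneg X) (hsNorm_nonneg b T))
  rw [mul_pow, sq_hsNorm, sq_hsNorm, ← tsum_mul_left]
  exact (summable_norm_mul_apply_sq b X hT).tsum_le_tsum (norm_mul_apply_sq_le b X T)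
    (hT.mul_left _)

end HilbertSchmidt

section FiniteRank

variable {E : Type*} [NormedAddCommGroup E] [InnerProductSpace ℂ E]
  {ι : Type*} (b : HilbertBasis ι ℂ E)

def IsFiniteRank (T : E →L[ℂ] E) : Prop :=
  ∃ (κ : Type) (_ : Fintype κ) (u v : κ → E), ∀ x, T x = ∑ k, ⟪v k, x⟫ • u k

lemma trOp_eq_sum_inner {T : E →L[ℂ] E} {κ : Type} [Fintype κ] {u v : κ → E}
    (h : ∀ x, T x = ∑ k, ⟪v k, x⟫ • u k) :
    trOp b T = ∑ k, ⟪v k, u k⟫ := by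
  simp only [trOp, h, inner_sum, inner_smul_right]
  rw [Summable.tsum_finsetSum fun k _ => b.summable_inner_mul_inner (v k) (u k)]
  exact Finset.sum_congr rfl fun k _ => b.tsum_inner_mul_inner (v k) (u k)

namespace IsFiniteRank

variable {T : E →L[ℂ] E}

lemma of_finiteDimensional_range [CompleteSpace E]
    (hT : FiniteDimensional ℂ (LinearMap.range (T : E →ₗ[ℂ] E))) : IsFiniteRank T := by
  let e := stdOrthonormalBasis ℂ (LinearMap.range (T : E →ₗ[ℂ] E))
  refine ⟨_, inferInstance, fun k => e k, fun k => adjoint T (e k), fun x => ?_⟩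
  have hx := congrArg Subtype.val (e.sum_repr ⟨T x, LinearMap.mem_range_self _ x⟩)
  simp only [Submodule.coe_sum, SetLike.val_smul, e.repr_apply_apply, Submodule.coe_inner] at hx
  simpa only [adjoint_inner_left] using hx.symm

lemma mul_left (hT : IsFiniteRank T) (S : E →L[ℂ] E) : IsFiniteRank (S * T) := by
  obtain ⟨κ, _, u, v, h⟩ := hT
  exact ⟨κ, ‹_›, fun k => S (u k), v, fun x => by simp [h]⟩

lemma mul_right [CompleteSpace E] (hT : IsFiniteRank T) (S : E →L[ℂ] E) :
    IsFiniteRank (T * S) := by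
  obtain ⟨κ, _, u, v, h⟩ := hT
  exact ⟨κ, ‹_›, u, fun k => adjoint S (v k), fun x => by simp [h, adjoint_inner_left]⟩

lemma sub {T' : E →L[ℂ] E} (hT : IsFiniteRank T) (hT' : IsFiniteRank T') :
    IsFiniteRank (T - T') := by
  obtain ⟨κ, _, u, v, h⟩ := hT
  obtain ⟨κ', _, u', v', h'⟩ := hT'
  refine ⟨κ ⊕ κ', inferInstance, Sum.elim u (-u'), Sum.elim v v', fun x => ?_⟩
  simp [h, h', Fintype.sum_sum_type, sub_eq_add_neg]

lemma summable_inner_apply (hT : IsFiniteRank T) : Summable fun i => ⟪b i, T (b i)⟫ := by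
  obtain ⟨κ, _, u, v, h⟩ := hT
  simp only [h, inner_sum, inner_smul_right]
  exact summable_sum fun k _ => b.summable_inner_mul_inner (v k) (u k)

lemma summable_norm_apply_sq [CompleteSpace E] (hT : IsFiniteRank T) :
    Summable fun i => ‖T (b i)‖ ^ 2 := by
  have h := ((hT.mul_left (adjoint T)).summable_inner_apply b).mapL Complex.reCLM
  refine h.congr fun i => ?_
  simp [mul_apply_eq_comp, adjoint_inner_right, inner_self_eq_norm_sq_to_K,
    ← Complex.ofReal_pow]

lemma trOp_mul_comm [CompleteSpace E] (hT : IsFiniteRank T) (S : E →L[ℂ] E) :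
    trOp b (S * T) = trOp b (T * S) := by
  obtain ⟨κ, _, u, v, h⟩ := hT
  rw [trOp_eq_sum_inner b (T := S * T) (u := fun k => S (u k)) (v := v) (fun x => by simp [h]),
    trOp_eq_sum_inner b (T := T * S) (u := u) (v := fun k => adjoint S (v k))
      (fun x => by simp [h, adjoint_inner_left])]
  simp only [adjoint_inner_left]

end IsFiniteRank

end FiniteRank

section Projection

variable {E : Type*} [NormedAddCommGroup E] [InnerProductSpace ℂ E] [CompleteSpace E]
  {ι : Type*} (b : HilbertBasis ι ℂ E) {P : E →L[ℂ] E}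

lemma trOp_mul_proj (hP : IsStarProjection P) (hPf : IsFiniteRank P) (M : E →L[ℂ] E) :
    trOp b (M * P) = trOp b (star P * (M * P)) := by
  conv_lhs => rw [← hP.isIdempotentElem.eq, ← mul_assoc]
  rw [hPf.trOp_mul_comm, hP.isSelfAdjoint.star_eq]

lemma trOp_proj (hP : IsStarProjection P) (hPf : IsFiniteRank P) :
    trOp b P = ((hsNorm b P ^ 2 : ℝ) : ℂ) := by
  rw [← one_mul P, trOp_mul_proj b hP hPf, one_mul, trOp_star_mul, sq_hsNorm,
    Complex.ofReal_tsum]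
  simp [inner_self_eq_norm_sq_to_K]

lemma trOp_star_mul_self_mul_proj_nonneg (hP : IsStarProjection P) (hPf : IsFiniteRank P)
    (X : E →L[ℂ] E) : 0 ≤ trOp b (star X * X * P) := by
  have h : star P * (star X * X * P) = star (X * P) * (X * P) := by
    simp only [star_mul, mul_assoc]
  rw [trOp_mul_proj b hP hPf, h, trOp_star_mul]
  refine tsum_nonneg fun i => ?_
  rw [inner_self_eq_norm_sq_to_K]
  positivity

lemma norm_trOp_star_mul_mul_le {S R : E →L[ℂ] E} (hS : Summable fun i => ‖S (b i)‖ ^ 2)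
    (hR : Summable fun i => ‖R (b i)‖ ^ 2) (X : E →L[ℂ] E) :
    ‖trOp b (star S * (X * R))‖ ≤ ‖X‖ * hsNorm b S * hsNorm b R := by
  calc ‖trOp b (star S * (X * R))‖ ≤ hsNorm b S * hsNorm b (X * R) :=
        norm_trOp_star_mul_le b hS (summable_norm_mul_apply_sq b X hR)
    _ ≤ hsNorm b S * (‖X‖ * hsNorm b R) :=
        mul_le_mul_of_nonneg_left (hsNorm_mul_le b X hR) (hsNorm_nonneg b S)
    _ = ‖X‖ * hsNorm b S * hsNorm b R := by ring

lemma norm_trOp_mul_proj_le (hP : IsStarProjection P) (hPf : IsFiniteRank P)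
    (X : E →L[ℂ] E) : ‖trOp b (X * P)‖ ≤ ‖X‖ * hsNorm b P ^ 2 := by
  have hsum := hPf.summable_norm_apply_sq b
  rw [trOp_mul_proj b hP hPf, sq, ← mul_assoc ‖X‖]
  exact norm_trOp_star_mul_mul_le b hsum hsum X

lemma norm_trOp_mul_proj_sub_le (hP : IsStarProjection P) (hPf : IsFiniteRank P)
    (X A : E →L[ℂ] E) :
    ‖trOp b (X * A * P) - trOp b (A * X * P)‖ ≤
      ‖X‖ * (hsNorm b (A * P - P * A) + hsNorm b (star A * P - P * star A)) * hsNorm b P := by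
  set D := A * P - P * A
  set D' := P * star A - star A * P
  have hD : IsFiniteRank D := (hPf.mul_left A).sub (hPf.mul_right A)
  have hD' : IsFiniteRank D' := (hPf.mul_right _).sub (hPf.mul_left _)
  have hstarD' : star D' = D := by
    simp only [D, D', star_sub, star_mul, star_star, hP.isSelfAdjoint.star_eq]
  have hP2 : P * P = P := hP.isIdempotentElem.eq
  have hsplit : trOp b (X * A * P) - trOp b (A * X * P) =
      trOp b (star P * (X * D)) + trOp b (star D' * (X * P)) := by
    rw [mul_assoc A, (hPf.mul_left X).trOp_mul_comm b A, hP.isSelfAdjoint.star_eq, hstarD',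
      ← hPf.trOp_mul_comm b (X * D), ← hD.trOp_mul_comm b (X * P),
      ← trOp_sub b ((hPf.mul_left _).summable_inner_apply b)
        (((hPf.mul_left X).mul_right A).summable_inner_apply b),
      ← trOp_add b ((hPf.mul_left _).summable_inner_apply b)
        ((hD.mul_left _).summable_inner_apply b)]
    congr 1
    calc X * A * P - X * P * A = X * A * (P * P) - X * (P * P) * A := by rw [hP2]
      _ = X * D * P + X * P * D := by simp only [D]; noncomm_ring
  have hPsum := hPf.summable_norm_apply_sq b
  calc ‖trOp b (X * A * P) - trOp b (A * X * P)‖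
      ≤ ‖trOp b (star P * (X * D))‖ + ‖trOp b (star D' * (X * P))‖ := by
        rw [hsplit]; exact norm_add_le _ _
    _ ≤ ‖X‖ * hsNorm b P * hsNorm b D + ‖X‖ * hsNorm b D' * hsNorm b P :=
        add_le_add (norm_trOp_star_mul_mul_le b hPsum (hD.summable_norm_apply_sq b) X)
          (norm_trOp_star_mul_mul_le b (hD'.summable_norm_apply_sq b) hPsum X)
    _ = _ := by
        rw [← hsNorm_neg b D', neg_sub]
        ring

end Projection

namespace IsFinRankProj

variable {ι : Type*} (b : HilbertBasis ι ℂ H) {P : H →L[ℂ] H}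

lemma isStarProjection (hP : IsFinRankProj P) : IsStarProjection P :=
  ⟨hP.1, hP.2.1⟩

lemma isFiniteRank (hP : IsFinRankProj P) : IsFiniteRank P :=
  .of_finiteDimensional_range hP.2.2

lemma sq_hsNorm_pos (hP : IsFinRankProj P) (hP₀ : P ≠ 0) : 0 < hsNorm b P ^ 2 :=
  pow_pos (hsNorm_pos b (hP.isFiniteRank.summable_norm_apply_sq b) hP₀) 2

lemma trOp_pos (hP : IsFinRankProj P) (hP₀ : P ≠ 0) : 0 < trOp b P := by
  rw [trOp_proj b hP.isStarProjection hP.isFiniteRank, Complex.zero_lt_real]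
  exact hP.sq_hsNorm_pos b hP₀

lemma exists_weakDual_eq_trOp_mul_div (hP : IsFinRankProj P) (hP₀ : P ≠ 0) :
    ∃ φ : WeakDual ℂ (H →L[ℂ] H), ‖WeakDual.toStrongDual φ‖ ≤ 1 ∧
      ∀ X, φ X = trOp b (X * P) / trOp b P := by
  have hPf := hP.isFiniteRank
  let φ : (H →L[ℂ] H) →ₗ[ℂ] ℂ :=
    { toFun := fun X => trOp b (X * P) / trOp b P
      map_add' := fun X Y => by
        rw [add_mul, trOp_add b ((hPf.mul_left X).summable_inner_apply b)
          ((hPf.mul_left Y).summable_inner_apply b), add_div]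
      map_smul' := fun c X => by
        rw [smul_mul_assoc, trOp_smul, RingHom.id_apply, smul_eq_mul, mul_div_assoc] }
  have hbound : ∀ X, ‖φ X‖ ≤ 1 * ‖X‖ := fun X => by
    rw [one_mul, LinearMap.coe_mk, AddHom.coe_mk, norm_div,
      trOp_proj b hP.isStarProjection hPf, Complex.norm_real,
      Real.norm_of_nonneg (sq_nonneg _), div_le_iff₀ (hP.sq_hsNorm_pos b hP₀)]
    exact norm_trOp_mul_proj_le b hP.isStarProjection hPf X
  exact ⟨φ.mkContinuous 1 hbound, φ.mkContinuous_norm_le zero_le_one hbound, fun _ => rfl⟩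

lemma norm_trOp_mul_sub_div_le (hP : IsFinRankProj P) (hP₀ : P ≠ 0) (X A : H →L[ℂ] H) :
    ‖(trOp b (X * A * P) - trOp b (A * X * P)) / trOp b P‖ ≤
      ‖X‖ * (hsNorm b (A * P - P * A) / hsNorm b P +
        hsNorm b (star A * P - P * star A) / hsNorm b P) := by
  have hpos := hsNorm_pos b (hP.isFiniteRank.summable_norm_apply_sq b) hP₀
  rw [norm_div, trOp_proj b hP.isStarProjection hP.isFiniteRank, Complex.norm_real,
    Real.norm_of_nonneg (sq_nonneg _), div_le_iff₀ (by positivity)]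
  calc _ ≤ _ := norm_trOp_mul_proj_sub_le b hP.isStarProjection hP.isFiniteRank X A
    _ = _ := by field_simp

end IsFinRankProj

section Hypertrace

variable {ι : Type*} (b : HilbertBasis ι ℂ H) {P : ℕ → H →L[ℂ] H}
  {ψseq : ℕ → WeakDual ℂ (H →L[ℂ] H)} {ψ : WeakDual ℂ (H →L[ℂ] H)}

lemma isStateOn_of_mapClusterPt (hP : ∀ n, IsFinRankProj (P n) ∧ P n ≠ 0)
    (hψseq : ∀ n X, ψseq n X = trOp b (X * P n) / trOp b (P n))
    (hψ : MapClusterPt ψ atTop ψseq) : IsStateOn (ψ : (H →L[ℂ] H) →L[ℂ] ℂ).toLinearMap := by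
  have heval (X : H →L[ℂ] H) : MapClusterPt (ψ X) atTop fun n => ψseq n X :=
    hψ.continuousAt_comp (WeakDual.eval_continuous X).continuousAt
  have htr_pos (n : ℕ) : 0 < trOp b (P n) := (hP n).1.trOp_pos b (hP n).2
  refine ⟨isClosed_singleton.mem_of_mapClusterPt (heval 1) (.of_forall fun n => ?_),
    fun X => isClosed_Ici.mem_of_mapClusterPt (heval _) (.of_forall fun n => ?_)⟩
  · rw [Set.mem_singleton_iff, hψseq, one_mul, div_self (htr_pos n).ne']
  · rw [Set.mem_Ici, hψseq]
    exact div_nonneg (trOp_star_mul_self_mul_proj_nonneg b (hP n).1.isStarProjection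
      (hP n).1.isFiniteRank X) (htr_pos n).le

lemma map_mul_comm_of_mapClusterPt {S : Set (H →L[ℂ] H)} (hS : ∀ A ∈ S, star A ∈ S)
    (hP : IsFolnerSeq b S P) (hψseq : ∀ n X, ψseq n X = trOp b (X * P n) / trOp b (P n))
    (hψ : MapClusterPt ψ atTop ψseq) (X : H →L[ℂ] H) {A : H →L[ℂ] H} (hA : A ∈ S) :
    ψ (X * A) = ψ (A * X) := by
  have hcl : MapClusterPt (ψ (X * A) - ψ (A * X)) atTop
      fun n => ψseq n (X * A) - ψseq n (A * X) :=
    hψ.continuousAt_comp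
      ((WeakDual.eval_continuous _).sub (WeakDual.eval_continuous _)).continuousAt
  have hlim : Tendsto (fun n => ψseq n (X * A) - ψseq n (A * X)) atTop (𝓝 0) := by
    refine squeeze_zero_norm (fun n => ?_)
      (by simpa using ((hP.2 A hA).add (hP.2 (star A) (hS A hA))).const_mul ‖X‖)
    rw [hψseq, hψseq, div_sub_div_same]
    exact (hP.1 n).1.norm_trOp_mul_sub_div_le b (hP.1 n).2 X A
  exact sub_eq_zero.mp (eq_of_nhds_neBot (hcl.clusterPt.mono hlim))

lemma isHypertrace_of_mapClusterPt {S : Set (H →L[ℂ] H)} (hS : ∀ A ∈ S, star A ∈ S)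
    (hP : IsFolnerSeq b S P) (hψseq : ∀ n X, ψseq n X = trOp b (X * P n) / trOp b (P n))
    (hψ : MapClusterPt ψ atTop ψseq) :
    IsHypertrace (ψ : (H →L[ℂ] H) →L[ℂ] ℂ).toLinearMap S :=
  ⟨isStateOn_of_mapClusterPt b hP.1 hψseq hψ,
    fun X _ hA => map_mul_comm_of_mapClusterPt b hS hP hψseq hψ X hA⟩

end Hypertrace

lemma IsHypertrace.isAmenableTrace {𝒜 : StarSubalgebra ℂ (H →L[ℂ] H)}
    {ψ : (H →L[ℂ] H) →ₗ[ℂ] ℂ} (h : IsHypertrace ψ 𝒜) : IsAmenableTrace 𝒜 (ψ ∘ₗ valLM 𝒜) :=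
  ⟨⟨h.1.1, fun a => h.1.2 a⟩, ψ, h, fun _ => rfl⟩

lemma WeakDual.exists_mapClusterPt_of_norm_le {𝕜 E α : Type*} [NontriviallyNormedField 𝕜]
    [ProperSpace 𝕜] [SeminormedAddCommGroup E] [NormedSpace 𝕜 E] {F : Filter α} [F.NeBot]
    {u : α → WeakDual 𝕜 E} {r : ℝ} (hu : ∀ a, ‖WeakDual.toStrongDual (u a)‖ ≤ r) :
    ∃ ψ, MapClusterPt ψ F u :=
  let ⟨ψ, _, hψ⟩ := (WeakDual.isCompact_closedBall 0 r).exists_mapClusterPt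
    (le_principal_iff.mpr (mem_map.mpr (univ_mem' fun a => by simpa using hu a)))
  ⟨ψ, hψ⟩

theorem amenableTrace_of_folnerSeq_general
    {H : Type*} [NormedAddCommGroup H] [InnerProductSpace ℂ H] [CompleteSpace H]
    {ι : Type*} (b : HilbertBasis ι ℂ H)
    (𝒜 : StarSubalgebra ℂ (H →L[ℂ] H))
    (P : ℕ → H →L[ℂ] H) (hP : IsFolnerSeq b (𝒜 : Set (H →L[ℂ] H)) P) :
    (∃ τ : ↥𝒜 →ₗ[ℂ] ℂ, IsAmenableTrace 𝒜 τ) ∧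
    ∀ ψseq : ℕ → WeakDual ℂ (H →L[ℂ] H),
      (∀ n X, ψseq n X = trOp b (X * P n) / trOp b (P n)) →
      ∀ ψ : WeakDual ℂ (H →L[ℂ] H), MapClusterPt ψ atTop ψseq →
        IsHypertrace (ψ : (H →L[ℂ] H) →L[ℂ] ℂ).toLinearMap (𝒜 : Set (H →L[ℂ] H)) ∧
        IsAmenableTrace 𝒜 ((ψ : (H →L[ℂ] H) →L[ℂ] ℂ).toLinearMap ∘ₗ valLM 𝒜) := by
  have hypertrace {ψseq : ℕ → WeakDual ℂ (H →L[ℂ] H)}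
      (hψseq : ∀ n X, ψseq n X = trOp b (X * P n) / trOp b (P n))
      {ψ : WeakDual ℂ (H →L[ℂ] H)} (hψ : MapClusterPt ψ atTop ψseq) :=
    isHypertrace_of_mapClusterPt b (fun _ => star_mem) hP hψseq hψ
  refine ⟨?_, fun ψseq hψseq ψ hψ => ⟨hypertrace hψseq hψ, (hypertrace hψseq hψ).isAmenableTrace⟩⟩
  choose ψseq hψseq_norm hψseq using
    fun n => (hP.1 n).1.exists_weakDual_eq_trOp_mul_div b (hP.1 n).2
  obtain ⟨ψ, hψ⟩ := WeakDual.exists_mapClusterPt_of_norm_le (F := atTop) hψseq_norm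
  exact ⟨_, (hypertrace hψseq hψ).isAmenableTrace⟩

/-- if a unital separable concrete C*-algebra `𝒜 ⊆ L(H)` has a Følner
sequence `{P n}`, then `𝒜` has an amenable trace; moreover any weak-* cluster point of the
states `ψₙ(X) = Tr(X Pₙ)/Tr(Pₙ)` is a hypertrace for `𝒜` whose restriction to `𝒜` is an
amenable trace. -/
theorem amenableTrace_of_folnerSeq
    {H : Type*} [NormedAddCommGroup H] [InnerProductSpace ℂ H] [CompleteSpace H]
    {ι : Type*} [Countable ι] (b : HilbertBasis ι ℂ H)
    (𝒜 : StarSubalgebra ℂ (H →L[ℂ] H)) (hclosed : IsClosed (𝒜 : Set (H →L[ℂ] H)))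
    (hsep : TopologicalSpace.IsSeparable (𝒜 : Set (H →L[ℂ] H)))
    (P : ℕ → H →L[ℂ] H) (hP : IsFolnerSeq b (𝒜 : Set (H →L[ℂ] H)) P) :
    (∃ τ : ↥𝒜 →ₗ[ℂ] ℂ, IsAmenableTrace 𝒜 τ) ∧
    ∀ ψseq : ℕ → WeakDual ℂ (H →L[ℂ] H),
      (∀ n X, ψseq n X = trOp b (X * P n) / trOp b (P n)) →
      ∀ ψ : WeakDual ℂ (H →L[ℂ] H), MapClusterPt ψ atTop ψseq →
        IsHypertrace (ψ : (H →L[ℂ] H) →L[ℂ] ℂ).toLinearMap (𝒜 : Set (H →L[ℂ] H)) ∧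
        IsAmenableTrace 𝒜 ((ψ : (H →L[ℂ] H) →L[ℂ] ℂ).toLinearMap ∘ₗ valLM 𝒜) :=
  amenableTrace_of_folnerSeq_general b 𝒜 P hP
end
end
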